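/- arXiv:1806.00524 — 5 statements merged into one kernel-verified Lean document; each statement's English description precedes it below -/
import Mathlib

section
/- Let n < 1 and let ν be any real number. Then for all x > 0, the integral ∫_x^∞ K_{ν+n}(t)/t^ν dt is strictly less than K_{ν+n−1}(x)/x^ν. -/
/-!
Put `μ = ν + n - 1`. Differentiating under the integral sign gives
`K_μ' = -(K_{μ+1} + K_{μ-1}) / 2`, and integrating `d/dt (e^{-x cosh t} sinh (μ t))` over
`(0, ∞)` gives the recurrence `K_{μ-1} = K_{μ+1} - (2μ/x) K_μ`; together
`K_μ' = (μ/x) K_μ - K_{μ+1}`, so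
`d/dt (K_μ(t) / t^ν) = (μ - ν) K_μ(t) / t^(ν+1) - K_{μ+1}(t) / t^ν`.
Since `K_μ(t) = O(e^{-t})`, integrating this over `(x, ∞)` gives
`∫_x^∞ K_{ν+n}(t) / t^ν dt = K_{ν+n-1}(x) / x^ν - (1 - n) ∫_x^∞ K_{ν+n-1}(t) / t^(ν+1) dt`
with a positive last integral.
-/

open MeasureTheory Set Real

/-- Modified Bessel function of the second kind:
`K_ν(x) = ∫_0^∞ exp(−x cosh t) cosh(ν t) dt`. -/
noncomputable def besselK (ν x : ℝ) : ℝ :=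
  ∫ t in Ioi (0 : ℝ), Real.exp (-(x * Real.cosh t)) * Real.cosh (ν * t)

open Filter Topology Asymptotics

theorem setIntegral_pos_of_forall_pos {X : Type*} [MeasurableSpace X] {μ : Measure X}
    {s : Set X} {f : X → ℝ} (hs : MeasurableSet s) (hμs : μ s ≠ 0)
    (hf : IntegrableOn f s μ) (hpos : ∀ x ∈ s, 0 < f x) : 0 < ∫ x in s, f x ∂μ := by
  have hnonneg : 0 ≤ᵐ[μ.restrict s] f :=
    (ae_restrict_iff' hs).2 (Eventually.of_forall fun x hx => (hpos x hx).le)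
  rw [setIntegral_pos_iff_support_of_nonneg_ae hnonneg hf,
    inter_eq_right.2 fun x hx => Function.mem_support.2 (hpos x hx).ne', pos_iff_ne_zero]
  exact hμs

theorem integral_Ioi_of_hasDerivAt_of_integrableOn {E : Type*} [NormedAddCommGroup E]
    [NormedSpace ℝ E] [CompleteSpace E] {f f' : ℝ → E} {a : ℝ}
    (hderiv : ∀ x ∈ Ici a, HasDerivAt f (f' x) x) (hf : IntegrableOn f (Ioi a))
    (hf' : IntegrableOn f' (Ioi a)) : ∫ x in Ioi a, f' x = -f a := by
  rw [integral_Ioi_of_hasDerivAt_of_tendsto' hderiv hf'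
    (tendsto_zero_of_hasDerivAt_of_integrableOn_Ioi (fun x hx => hderiv x hx.out.le) hf' hf),
    zero_sub]

theorem cosh_le_exp_abs (y : ℝ) : cosh y ≤ exp |y| := by
  rw [← cosh_abs, cosh_eq]
  linarith [exp_le_exp.2 (neg_le_self (abs_nonneg y))]

theorem abs_sinh_le_cosh (y : ℝ) : |sinh y| ≤ cosh y := by
  rw [abs_sinh, ← cosh_abs]
  exact (sinh_lt_cosh _).le

theorem tendsto_exp_neg_mul_cosh_add_mul_atTop {x : ℝ} (hx : 0 < x) (a : ℝ) :
    Tendsto (fun t => exp (-(x * cosh t) + a * t)) atTop (𝓝 0) := by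
  have hlim : Tendsto (fun t => exp t ^ a * exp (-(x / 2) * exp t)) atTop (𝓝 0) :=
    (tendsto_rpow_mul_exp_neg_mul_atTop_nhds_zero a (x / 2) (half_pos hx)).comp tendsto_exp_atTop
  refine squeeze_zero (fun t => (exp_pos _).le) (fun t => ?_) hlim
  have hcosh : exp t / 2 ≤ cosh t := by
    rw [cosh_eq]
    linarith [exp_pos (-t)]
  rw [← exp_mul, mul_comm t a, ← exp_add, add_comm]
  exact exp_le_exp.2 (by nlinarith)

theorem isBigO_exp_neg_mul_cosh_add_mul_atTop {x : ℝ} (hx : 0 < x) (a : ℝ) :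
    (fun t => exp (-(x * cosh t) + a * t)) =O[atTop] fun t => exp (-1 * t) := by
  refine IsBigO.of_bound 1 ?_
  filter_upwards [(tendsto_exp_neg_mul_cosh_add_mul_atTop hx (a + 1)).eventually
    (eventually_le_nhds one_pos)] with t ht
  rw [norm_of_nonneg (exp_pos _).le, norm_of_nonneg (exp_pos _).le, one_mul]
  calc exp (-(x * cosh t) + a * t) = exp (-(x * cosh t) + (a + 1) * t) * exp (-1 * t) := by
        rw [← exp_add]; ring_nf
    _ ≤ exp (-1 * t) := mul_le_of_le_one_left (exp_pos _).le ht

noncomputable def besselKIntegrand (μ x t : ℝ) : ℝ := exp (-(x * cosh t)) * cosh (μ * t)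

theorem besselK_eq_integral_besselKIntegrand (μ x : ℝ) :
    besselK μ x = ∫ t in Ioi 0, besselKIntegrand μ x t := rfl

theorem besselKIntegrand_pos (μ x t : ℝ) : 0 < besselKIntegrand μ x t :=
  mul_pos (exp_pos _) (cosh_pos _)

theorem continuous_besselKIntegrand (μ x : ℝ) : Continuous (besselKIntegrand μ x) := by
  unfold besselKIntegrand; fun_prop

theorem besselKIntegrand_le_exp {t : ℝ} (μ x : ℝ) (ht : 0 ≤ t) :
    besselKIntegrand μ x t ≤ exp (-(x * cosh t) + |μ| * t) := by
  rw [exp_add]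
  refine mul_le_mul_of_nonneg_left ?_ (exp_pos _).le
  simpa [abs_mul, abs_of_nonneg ht] using cosh_le_exp_abs (μ * t)

theorem integrableOn_besselKIntegrand (μ : ℝ) {x : ℝ} (hx : 0 < x) :
    IntegrableOn (besselKIntegrand μ x) (Ioi 0) := by
  refine integrable_of_isBigO_exp_neg one_pos (continuous_besselKIntegrand μ x).continuousOn
    (IsBigO.trans ?_ (isBigO_exp_neg_mul_cosh_add_mul_atTop hx |μ|))
  refine IsBigO.of_bound 1 ?_
  filter_upwards [eventually_ge_atTop 0] with t ht
  rw [norm_of_nonneg (besselKIntegrand_pos μ x t).le, norm_of_nonneg (exp_pos _).le, one_mul]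
  exact besselKIntegrand_le_exp μ x ht

theorem besselKIntegrand_le_exp_sub_mul {x y : ℝ} (μ t : ℝ) (hxy : x ≤ y) :
    besselKIntegrand μ y t ≤ exp (x - y) * besselKIntegrand μ x t := by
  rw [besselKIntegrand, besselKIntegrand, ← mul_assoc, ← exp_add]
  refine mul_le_mul_of_nonneg_right (exp_le_exp.2 ?_) (cosh_pos _).le
  nlinarith [one_le_cosh t]

theorem besselKIntegrand_le_of_le {x y : ℝ} (μ t : ℝ) (hxy : x ≤ y) :
    besselKIntegrand μ y t ≤ besselKIntegrand μ x t := by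
  refine mul_le_mul_of_nonneg_right (exp_le_exp.2 ?_) (cosh_pos _).le
  nlinarith [cosh_pos t]

theorem cosh_mul_besselKIntegrand (μ x t : ℝ) :
    cosh t * besselKIntegrand μ x t =
      (besselKIntegrand (μ + 1) x t + besselKIntegrand (μ - 1) x t) / 2 := by
  simp only [besselKIntegrand, add_mul, sub_mul, one_mul, cosh_add, cosh_sub]
  ring

theorem hasDerivAt_besselKIntegrand (μ t y : ℝ) :
    HasDerivAt (fun y => besselKIntegrand μ y t) (-(cosh t * besselKIntegrand μ y t)) y := by
  have h := ((hasDerivAt_mul_const (x := y) (cosh t)).fun_neg.exp).mul_const (cosh (μ * t))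
  exact h.congr_deriv (by rw [besselKIntegrand]; ring)

theorem besselK_pos (μ : ℝ) {x : ℝ} (hx : 0 < x) : 0 < besselK μ x :=
  setIntegral_pos_of_forall_pos measurableSet_Ioi (by simp) (integrableOn_besselKIntegrand μ hx)
    fun t _ => besselKIntegrand_pos μ x t

theorem besselK_sub_one (μ : ℝ) {x : ℝ} (hx : 0 < x) :
    besselK (μ - 1) x = besselK (μ + 1) x - 2 * μ / x * besselK μ x := by
  set F : ℝ → ℝ := fun t => exp (-(x * cosh t)) * sinh (μ * t)
  set F' : ℝ → ℝ := fun t => μ * besselKIntegrand μ x t -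
    x / 2 * (besselKIntegrand (μ + 1) x t - besselKIntegrand (μ - 1) x t)
  have hderiv : ∀ t, HasDerivAt F (F' t) t := fun t => by
    have h := ((hasDerivAt_cosh t).const_mul x).fun_neg.exp.fun_mul
      ((hasDerivAt_const_mul (x := t) μ).sinh)
    refine h.congr_deriv ?_
    simp only [F', besselKIntegrand, add_mul, sub_mul, one_mul, cosh_add, cosh_sub]
    ring
  have hF : IntegrableOn F (Ioi 0) := by
    refine (integrableOn_besselKIntegrand μ hx).mono'
      (by fun_prop : Continuous F).aestronglyMeasurable (Eventually.of_forall fun t => ?_)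
    rw [norm_mul, norm_of_nonneg (exp_pos _).le, norm_eq_abs]
    exact mul_le_mul_of_nonneg_left (abs_sinh_le_cosh _) (exp_pos _).le
  have hK := fun ν => integrableOn_besselKIntegrand ν hx
  have hF' : IntegrableOn F' (Ioi 0) :=
    ((hK μ).const_mul μ).sub (((hK (μ + 1)).sub (hK (μ - 1))).const_mul (x / 2))
  have h := integral_Ioi_of_hasDerivAt_of_integrableOn (fun t _ => hderiv t) hF hF'
  simp only [F, F', mul_zero, sinh_zero, neg_zero] at h
  rw [integral_sub, integral_const_mul, integral_const_mul, integral_sub] at h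
  · simp only [← besselK_eq_integral_besselKIntegrand] at h
    field_simp
    linarith
  exacts [hK _, hK _, (hK μ).const_mul μ, ((hK _).sub (hK _)).const_mul _]

theorem integrableOn_cosh_mul_besselKIntegrand (μ : ℝ) {x : ℝ} (hx : 0 < x) :
    IntegrableOn (fun t => cosh t * besselKIntegrand μ x t) (Ioi 0) := by
  simp_rw [cosh_mul_besselKIntegrand]
  exact ((integrableOn_besselKIntegrand (μ + 1) hx).add
    (integrableOn_besselKIntegrand (μ - 1) hx)).div_const 2

theorem integral_cosh_mul_besselKIntegrand (μ : ℝ) {x : ℝ} (hx : 0 < x) :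
    ∫ t in Ioi 0, cosh t * besselKIntegrand μ x t =
      (besselK (μ + 1) x + besselK (μ - 1) x) / 2 := by
  simp_rw [cosh_mul_besselKIntegrand]
  rw [integral_div, integral_add (integrableOn_besselKIntegrand (μ + 1) hx)
    (integrableOn_besselKIntegrand (μ - 1) hx)]
  rfl

theorem hasDerivAt_besselK_eq_neg_half_add (μ : ℝ) {x : ℝ} (hx : 0 < x) :
    HasDerivAt (besselK μ) (-((besselK (μ + 1) x + besselK (μ - 1) x) / 2)) x := by
  have h := hasDerivAt_integral_of_dominated_loc_of_deriv_le (μ := volume.restrict (Ioi 0))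
    (F := fun y t => besselKIntegrand μ y t) (F' := fun y t => -(cosh t * besselKIntegrand μ y t))
    (bound := fun t => cosh t * besselKIntegrand μ (x / 2) t) (x₀ := x)
    (Ioi_mem_nhds (half_lt_self hx))
    (Eventually.of_forall fun y => (continuous_besselKIntegrand μ y).aestronglyMeasurable)
    (integrableOn_besselKIntegrand μ hx)
    (continuous_cosh.mul (continuous_besselKIntegrand μ x)).neg.aestronglyMeasurable
    (Eventually.of_forall fun t y hy => ?_)
    (integrableOn_cosh_mul_besselKIntegrand μ (half_pos hx))
    (Eventually.of_forall fun t y _ => hasDerivAt_besselKIntegrand μ t y)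
  · rw [integral_neg, integral_cosh_mul_besselKIntegrand μ hx] at h
    exact h.2
  · rw [norm_neg, norm_mul, norm_of_nonneg (cosh_pos t).le,
      norm_of_nonneg (besselKIntegrand_pos μ y t).le]
    exact mul_le_mul_of_nonneg_left (besselKIntegrand_le_of_le μ t (le_of_lt hy)) (cosh_pos t).le

theorem hasDerivAt_besselK (μ : ℝ) {x : ℝ} (hx : 0 < x) :
    HasDerivAt (besselK μ) (μ / x * besselK μ x - besselK (μ + 1) x) x := by
  refine (hasDerivAt_besselK_eq_neg_half_add μ hx).congr_deriv ?_
  rw [besselK_sub_one μ hx]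
  ring

theorem besselK_le_exp_sub_mul (μ : ℝ) {x y : ℝ} (hx : 0 < x) (hxy : x ≤ y) :
    besselK μ y ≤ exp (x - y) * besselK μ x := by
  rw [besselK_eq_integral_besselKIntegrand, besselK_eq_integral_besselKIntegrand,
    ← integral_const_mul]
  exact setIntegral_mono_on (integrableOn_besselKIntegrand μ (hx.trans_le hxy))
    ((integrableOn_besselKIntegrand μ hx).const_mul _) measurableSet_Ioi
    fun t _ => besselKIntegrand_le_exp_sub_mul μ t hxy

theorem isBigO_besselK_exp_neg_atTop (μ : ℝ) : besselK μ =O[atTop] fun y => exp (-y) := by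
  refine IsBigO.of_bound (exp 1 * besselK μ 1) ?_
  filter_upwards [eventually_ge_atTop 1] with y hy
  rw [norm_of_nonneg (besselK_pos μ (one_pos.trans_le hy)).le, norm_of_nonneg (exp_pos _).le,
    mul_right_comm, ← exp_add, ← sub_eq_add_neg]
  exact besselK_le_exp_sub_mul μ one_pos hy

theorem integrableOn_besselK_div_rpow (μ b : ℝ) {x : ℝ} (hx : 0 < x) :
    IntegrableOn (fun t => besselK μ t / t ^ b) (Ioi x) := by
  refine integrable_of_isBigO_exp_neg (b := 1 / 2) one_half_pos (fun y hy => ?_) ?_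
  · have hy : 0 < y := hx.trans_le hy
    exact ((hasDerivAt_besselK μ hy).continuousAt.div
      (continuousAt_rpow_const y b (Or.inl hy.ne')) (rpow_pos_of_pos hy b).ne').continuousWithinAt
  · have h := (isLittleO_rpow_exp_pos_mul_atTop (-b) one_half_pos).isBigO.mul
      (isBigO_besselK_exp_neg_atTop μ)
    refine (h.congr' ?_ (Eventually.of_forall fun y => ?_))
    · filter_upwards [eventually_gt_atTop 0] with y hy
      rw [rpow_neg hy.le, div_eq_inv_mul]
    · dsimp only
      rw [← exp_add]; ring_nf

theorem hasDerivAt_besselK_div_rpow (μ ν : ℝ) {x : ℝ} (hx : 0 < x) :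
    HasDerivAt (fun y => besselK μ y / y ^ ν)
      ((μ - ν) * (besselK μ x / x ^ (ν + 1)) - besselK (μ + 1) x / x ^ ν) x := by
  have hxν : x ^ ν ≠ 0 := (rpow_pos_of_pos hx ν).ne'
  refine ((hasDerivAt_besselK μ hx).div (hasDerivAt_rpow_const (Or.inl hx.ne')) hxν).congr_deriv
    ?_
  rw [rpow_add_one hx.ne', rpow_sub_one hx.ne']
  field_simp
  ring

theorem integral_Ioi_besselK_add_one_div_rpow (μ ν : ℝ) {x : ℝ} (hx : 0 < x) :
    ∫ t in Ioi x, besselK (μ + 1) t / t ^ ν =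
      besselK μ x / x ^ ν + (μ - ν) * ∫ t in Ioi x, besselK μ t / t ^ (ν + 1) := by
  have hK := integrableOn_besselK_div_rpow μ (ν + 1) hx
  have hK' := integrableOn_besselK_div_rpow (μ + 1) ν hx
  have h := integral_Ioi_of_hasDerivAt_of_integrableOn
    (fun y hy => hasDerivAt_besselK_div_rpow μ ν (hx.trans_le hy))
    (integrableOn_besselK_div_rpow μ ν hx) ((hK.const_mul (μ - ν)).sub hK')
  rw [integral_sub (hK.const_mul (μ - ν)) hK', integral_const_mul] at h
  linarith

theorem stmt_1 (ν n : ℝ) (hn : n < 1) :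
    ∀ x : ℝ, 0 < x →
      (∫ t in Ioi x, besselK (ν + n) t / t ^ ν) < besselK (ν + n - 1) x / x ^ ν := by
  intro x hx
  have hpos : 0 < ∫ t in Ioi x, besselK (ν + n - 1) t / t ^ (ν + 1) :=
    setIntegral_pos_of_forall_pos measurableSet_Ioi (by simp)
      (integrableOn_besselK_div_rpow _ _ hx) fun t ht =>
        div_pos (besselK_pos _ (hx.trans ht)) (rpow_pos_of_pos (hx.trans ht) _)
  have h := integral_Ioi_besselK_add_one_div_rpow (ν + n - 1) ν hx
  rw [sub_add_cancel, show ν + n - 1 - ν = n - 1 by ring] at h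
  rw [h]
  linarith [mul_neg_of_neg_of_pos (sub_neg.2 hn) hpos]
end

section
/- Let n > −1 and ν > −(n+1)/2. Then for all x > 0, ∫_0^x I_{ν+n}(t)/t^ν dt > I_{ν+n+1}(x)/x^ν. Moreover, if ν = −(n+1)/2 then equality holds: ∫_0^x I_{ν+n}(t)/t^ν dt = I_{ν+n+1}(x)/x^ν for all x > 0. -/
/-!
Write `T k = (x/2)^(ν+n+2k) / (k! Γ(ν+n+k+1))`, the terms of the series for `I_{ν+n}(x)`.
Since `I_{ν+n}(t)/t^ν` is a power series in `t` with exponents `n + 2k > -1`, integrating term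
by term gives `∫_0^x I_{ν+n}(t)/t^ν dt = x^(1-ν) Σ T k / (n+2k+1)`, while `Γ(s+1) = s Γ(s)` gives
`I_{ν+n+1}(x)/x^ν = x^(1-ν) Σ T k / (2(ν+n+k+1))`. The difference of the two sides is therefore
`(2ν+n+1) x^(1-ν) Σ T k / ((n+2k+1) · 2(ν+n+k+1))`, a positive multiple of `2ν+n+1`.
-/

open MeasureTheory Set Real

/-- Modified Bessel function of the first kind:
`I_ν(x) = Σ_{k=0}^∞ (x/2)^{ν+2k} / (k! Γ(ν+k+1))`. -/
noncomputable def besselI (ν x : ℝ) : ℝ :=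
  ∑' k : ℕ, (x / 2) ^ (ν + 2 * (k : ℝ)) / ((Nat.factorial k : ℝ) * Real.Gamma (ν + (k : ℝ) + 1))

open Filter

noncomputable def besselITerm (μ x : ℝ) (k : ℕ) : ℝ :=
  (x / 2) ^ (μ + 2 * (k : ℝ)) / ((Nat.factorial k : ℝ) * Gamma (μ + (k : ℝ) + 1))

theorem besselI_eq_tsum (μ x : ℝ) : besselI μ x = ∑' k, besselITerm μ x k := rfl

section

variable {μ x : ℝ}

theorem besselITerm_pos (hμ : 0 < μ + 1) (hx : 0 < x) (k : ℕ) : 0 < besselITerm μ x k := by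
  have : 0 < μ + k + 1 := by linarith [(Nat.cast_nonneg k : (0 : ℝ) ≤ k)]
  unfold besselITerm
  positivity

theorem besselITerm_succ (hx : 0 < x) {k : ℕ} (hk : μ + k + 1 ≠ 0) :
    besselITerm μ x (k + 1) = besselITerm μ x k * ((x / 2) ^ 2 / ((k + 1) * (μ + k + 1))) := by
  have hpow : (x / 2) ^ (μ + 2 * ((k + 1 : ℕ) : ℝ)) = (x / 2) ^ (μ + 2 * (k : ℝ)) * (x / 2) ^ 2 := by
    rw [← rpow_natCast, ← rpow_add (by positivity)]
    push_cast; ring_nf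
  have hGamma : Gamma (μ + ((k + 1 : ℕ) : ℝ) + 1) = (μ + k + 1) * Gamma (μ + k + 1) := by
    rw [← Gamma_add_one hk]; push_cast; ring_nf
  unfold besselITerm
  rw [hpow, hGamma, Nat.factorial_succ, div_mul_div_comm]
  congr 1
  push_cast
  ring

theorem besselITerm_add_one (hx : 0 < x) {k : ℕ} (hk : μ + k + 1 ≠ 0) :
    besselITerm (μ + 1) x k = x / 2 * (besselITerm μ x k / (μ + k + 1)) := by
  have hpow : (x / 2) ^ (μ + 1 + 2 * (k : ℝ)) = x / 2 * (x / 2) ^ (μ + 2 * (k : ℝ)) := by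
    rw [add_right_comm, rpow_add_one (by positivity)]
    ring
  have hGamma : Gamma (μ + 1 + k + 1) = (μ + k + 1) * Gamma (μ + k + 1) := by
    rw [← Gamma_add_one hk]; ring_nf
  unfold besselITerm
  rw [hpow, hGamma]
  field_simp

theorem summable_besselITerm (hμ : 0 < μ + 1) (hx : 0 < x) : Summable (besselITerm μ x) := by
  have hk (k : ℕ) : 0 < μ + k + 1 := by linarith [(Nat.cast_nonneg k : (0 : ℝ) ≤ k)]
  refine summable_of_ratio_test_tendsto_lt_one one_pos
    (.of_forall fun k ↦ (besselITerm_pos hμ hx k).ne') ?_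
  have hratio (k : ℕ) : ‖besselITerm μ x (k + 1)‖ / ‖besselITerm μ x k‖
      = (x / 2) ^ 2 / ((k + 1) * (μ + k + 1)) := by
    rw [norm_of_nonneg (besselITerm_pos hμ hx _).le, norm_of_nonneg (besselITerm_pos hμ hx _).le,
      besselITerm_succ hx (hk k).ne', mul_div_cancel_left₀ _ (besselITerm_pos hμ hx k).ne']
  simp only [hratio]
  refine tendsto_const_nhds.div_atTop (Tendsto.atTop_mul_atTop₀ ?_ ?_)
  · exact tendsto_atTop_add_const_right _ _ tendsto_natCast_atTop_atTop
  · exact tendsto_atTop_add_const_right _ _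
      (tendsto_atTop_add_const_left _ _ tendsto_natCast_atTop_atTop)

theorem summable_besselITerm_div (hμ : 0 < μ + 1) (hx : 0 < x) {d : ℕ → ℝ} {c : ℝ} (hc : 0 < c)
    (hd : ∀ k, c ≤ d k) : Summable fun k ↦ besselITerm μ x k / d k := by
  refine .of_nonneg_of_le (fun k ↦ ?_) (fun k ↦ ?_) ((summable_besselITerm hμ hx).div_const c)
  · exact div_nonneg (besselITerm_pos hμ hx k).le (hc.trans_le (hd k)).le
  · exact div_le_div_of_nonneg_left (besselITerm_pos hμ hx k).le hc (hd k)

theorem tsum_besselITerm_div_pos (hμ : 0 < μ + 1) (hx : 0 < x) {d : ℕ → ℝ} {c : ℝ} (hc : 0 < c)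
    (hd : ∀ k, c ≤ d k) : 0 < ∑' k, besselITerm μ x k / d k :=
  (summable_besselITerm_div hμ hx hc hd).tsum_pos
    (fun k ↦ div_nonneg (besselITerm_pos hμ hx k).le (hc.trans_le (hd k)).le) 0
    (div_pos (besselITerm_pos hμ hx 0) (hc.trans_le (hd 0)))

end

theorem besselITerm_eq_rpow_mul (μ : ℝ) {t : ℝ} (ht : 0 ≤ t) (k : ℕ) :
    besselITerm μ t k = t ^ (μ + 2 * (k : ℝ)) * besselITerm μ 1 k := by
  unfold besselITerm
  rw [div_rpow ht zero_le_two, div_rpow zero_le_one zero_le_two, one_rpow]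
  ring

theorem besselITerm_div_rpow (μ ν : ℝ) {t : ℝ} (ht : 0 < t) (k : ℕ) :
    besselITerm μ t k / t ^ ν = besselITerm μ 1 k * t ^ (μ - ν + 2 * (k : ℝ)) := by
  rw [besselITerm_eq_rpow_mul μ ht.le, sub_add_eq_add_sub, rpow_sub ht]
  ring

theorem integral_besselITerm_div_rpow (μ ν : ℝ) {x : ℝ} (hx : 0 < x) {k : ℕ}
    (hk : -1 < μ - ν + 2 * (k : ℝ)) :
    ∫ t in Ioc 0 x, besselITerm μ t k / t ^ ν
      = x ^ (1 - ν) * (besselITerm μ x k / (μ - ν + 2 * (k : ℝ) + 1)) := by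
  rw [setIntegral_congr_fun measurableSet_Ioc fun t ht ↦ besselITerm_div_rpow μ ν ht.1 k,
    ← intervalIntegral.integral_of_le hx.le, intervalIntegral.integral_const_mul,
    integral_rpow (.inl hk), zero_rpow (by linarith), besselITerm_eq_rpow_mul μ hx.le,
    show μ - ν + 2 * (k : ℝ) + 1 = (1 - ν) + (μ + 2 * k) by ring, rpow_add hx]
  ring

theorem integrableOn_besselITerm_div_rpow (μ ν : ℝ) {x : ℝ} (hx : 0 < x) {k : ℕ}
    (hk : -1 < μ - ν + 2 * (k : ℝ)) :
    IntegrableOn (fun t ↦ besselITerm μ t k / t ^ ν) (Ioc 0 x) := by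
  refine IntegrableOn.congr_fun ?_ (fun t ht ↦ (besselITerm_div_rpow μ ν ht.1 k).symm)
    measurableSet_Ioc
  exact ((intervalIntegrable_iff_integrableOn_Ioc_of_le hx.le).mp
    (intervalIntegral.intervalIntegrable_rpow' hk)).const_mul _

theorem integral_besselI_div_rpow {μ ν x : ℝ} (hμ : 0 < μ + 1) (hμν : -1 < μ - ν) (hx : 0 < x) :
    ∫ t in (0 : ℝ)..x, besselI μ t / t ^ ν
      = x ^ (1 - ν) * ∑' k : ℕ, besselITerm μ x k / (μ - ν + 2 * (k : ℝ) + 1) := by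
  have hk (k : ℕ) : -1 < μ - ν + 2 * (k : ℝ) := by linarith [(Nat.cast_nonneg k : (0 : ℝ) ≤ k)]
  have hnorm (k : ℕ) : ∫ t in Ioc 0 x, ‖besselITerm μ t k / t ^ ν‖
      = ∫ t in Ioc 0 x, besselITerm μ t k / t ^ ν :=
    setIntegral_congr_fun measurableSet_Ioc fun t ht ↦
      norm_of_nonneg (div_nonneg (besselITerm_pos hμ ht.1 k).le (rpow_nonneg ht.1.le ν))
  have hsum : Summable fun k ↦ ∫ t in Ioc 0 x, ‖besselITerm μ t k / t ^ ν‖ := by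
    simp only [hnorm, integral_besselITerm_div_rpow μ ν hx (hk _)]
    refine (summable_besselITerm_div hμ hx (c := μ - ν + 1) (by linarith) fun k ↦ ?_).mul_left _
    linarith [(Nat.cast_nonneg k : (0 : ℝ) ≤ k)]
  rw [intervalIntegral.integral_of_le hx.le, ← tsum_mul_left]
  simp only [besselI_eq_tsum, ← tsum_div_const, ← integral_besselITerm_div_rpow μ ν hx (hk _)]
  exact (integral_tsum_of_summable_integral_norm
    (fun k ↦ integrableOn_besselITerm_div_rpow μ ν hx (hk k)) hsum).symm

theorem besselI_add_one_div_rpow {μ x : ℝ} (hμ : 0 < μ + 1) (hx : 0 < x) (ν : ℝ) :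
    besselI (μ + 1) x / x ^ ν
      = x ^ (1 - ν) * ∑' k : ℕ, besselITerm μ x k / (2 * (μ + k + 1)) := by
  rw [besselI_eq_tsum, ← tsum_div_const, ← tsum_mul_left]
  congr 1 with k
  have hk : 0 < μ + k + 1 := by linarith [(Nat.cast_nonneg k : (0 : ℝ) ≤ k)]
  rw [besselITerm_add_one hx hk.ne', rpow_sub hx, rpow_one]
  field_simp

theorem integral_besselI_div_rpow_sub_besselI {ν n x : ℝ} (hn : -1 < n) (hμ : 0 < ν + n + 1)
    (hx : 0 < x) :
    (∫ t in (0 : ℝ)..x, besselI (ν + n) t / t ^ ν) - besselI (ν + n + 1) x / x ^ ν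
      = (2 * ν + n + 1) * x ^ (1 - ν) *
          ∑' k : ℕ, besselITerm (ν + n) x k / ((n + 2 * k + 1) * (2 * (ν + n + k + 1))) := by
  have hk (k : ℕ) : (0 : ℝ) ≤ k := Nat.cast_nonneg k
  rw [integral_besselI_div_rpow (by linarith) (by linarith) hx, add_sub_cancel_left,
    besselI_add_one_div_rpow hμ hx, ← mul_sub, mul_comm (2 * ν + n + 1), mul_assoc,
    ← tsum_mul_left,
    ← (summable_besselITerm_div hμ hx (c := n + 1) (by linarith) fun k ↦ by linarith [hk k]).tsum_sub
      (summable_besselITerm_div hμ hx (c := 2 * (ν + n + 1)) (by linarith)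
        fun k ↦ by linarith [hk k])]
  congr 2 with k
  have : n + 2 * k + 1 ≠ 0 := by linarith [hk k]
  have : ν + n + k + 1 ≠ 0 := by linarith [hk k]
  field_simp
  ring

theorem stmt_10 (ν n : ℝ) (hn : n > -1) :
    (ν > -(n + 1) / 2 → ∀ x : ℝ, 0 < x →
      (∫ t in (0 : ℝ)..x, besselI (ν + n) t / t ^ ν) > besselI (ν + n + 1) x / x ^ ν) ∧
    (ν = -(n + 1) / 2 → ∀ x : ℝ, 0 < x →
      (∫ t in (0 : ℝ)..x, besselI (ν + n) t / t ^ ν) = besselI (ν + n + 1) x / x ^ ν) := by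
  refine ⟨fun hν x hx ↦ ?_, fun hν x hx ↦ ?_⟩
  · have hμ : 0 < ν + n + 1 := by linarith
    have hd (k : ℕ) : (n + 1) * (2 * (ν + n + 1)) ≤ (n + 2 * k + 1) * (2 * (ν + n + k + 1)) := by
      have hk : (0 : ℝ) ≤ k := Nat.cast_nonneg k
      exact mul_le_mul (by linarith) (by linarith) (by linarith) (by linarith)
    have hseries := tsum_besselITerm_div_pos hμ hx (mul_pos (by linarith) (by linarith)) hd
    rw [gt_iff_lt, ← sub_pos, integral_besselI_div_rpow_sub_besselI hn hμ hx]
    have : 0 < 2 * ν + n + 1 := by linarith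
    positivity
  · have hμ : 0 < ν + n + 1 := by linarith
    rw [← sub_eq_zero, integral_besselI_div_rpow_sub_besselI hn hμ hx,
      show 2 * ν + n + 1 = 0 by linarith, zero_mul, zero_mul]
end

section
/- Let n > −1 and ν > −(n+1)/2. Then for all x > 0, ∫_0^x I_{ν+n}(t)/t^ν dt < (2(ν+n+1)/(n+1))·I_{ν+n+1}(x)/x^ν − ((2ν+n+1)/(n+1))·I_{ν+n+3}(x)/x^ν. -/
open MeasureTheory Set Real

/-!
Write `a_k` for the `k`-th term of the series of `I_{ν+n}(x)`. Integrating the series of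
`I_{ν+n}(t) / t^ν` termwise gives `∑ x a_k / (x^ν (n + 2k + 1))`. The index shifts
`I_{μ+1}` and `I_{μ+3}` (the latter starting at `a_1`) write the right-hand side as a series
in the same `x a_k / x^ν`, and its `k`-th coefficient exceeds `1 / (n + 2k + 1)` by
`k (2ν+n+1)(2ν+n+3) / (2 (n+1)(ν+n+k+1)(ν+n+k+2)(n+2k+1))`: zero for `k = 0`, positive after.
-/

noncomputable def besselTerm (μ : ℝ) (k : ℕ) (x : ℝ) : ℝ :=
  (x / 2) ^ (μ + 2 * (k : ℝ)) / ((Nat.factorial k : ℝ) * Gamma (μ + (k : ℝ) + 1))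

section besselTerm

variable {μ x : ℝ} {k : ℕ}

lemma besselTerm_pos (hμ : -1 < μ) (hx : 0 < x) (k : ℕ) : 0 < besselTerm μ k x := by
  have := Gamma_pos_of_pos (show 0 < μ + k + 1 by linarith [k.cast_nonneg (α := ℝ)])
  unfold besselTerm
  positivity

lemma besselTerm_eq_rpow_mul (hx : 0 ≤ x) :
    besselTerm μ k x = x ^ (μ + 2 * k) * besselTerm μ k 1 := by
  simp only [besselTerm, div_eq_mul_one_div x, mul_rpow hx (by norm_num : (0 : ℝ) ≤ 1 / 2)]
  ring

lemma besselTerm_div_rpow (ν : ℝ) (hx : 0 < x) :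
    besselTerm μ k x / x ^ ν = besselTerm μ k 1 * x ^ (μ - ν + 2 * k) := by
  rw [besselTerm_eq_rpow_mul hx.le, show μ - ν + 2 * k = μ + 2 * k - ν by ring, rpow_sub hx]
  ring

lemma besselTerm_add_one (hx : 0 < x) (h : μ + k + 1 ≠ 0) :
    besselTerm (μ + 1) k x = besselTerm μ k x * (x / 2) / (μ + k + 1) := by
  simp only [besselTerm]
  rw [show μ + 1 + 2 * (k : ℝ) = μ + 2 * k + 1 by ring, rpow_add_one (by positivity),
    show μ + 1 + k + 1 = (μ + k + 1) + 1 by ring, Gamma_add_one h]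
  field_simp

lemma besselTerm_add_two (h : μ + k + 2 ≠ 0) :
    besselTerm (μ + 2) k x = besselTerm μ (k + 1) x * (k + 1) / (μ + k + 2) := by
  simp only [besselTerm, Nat.factorial_succ, Nat.cast_mul, Nat.cast_succ]
  rw [show μ + 2 + 2 * (k : ℝ) = μ + 2 * (k + 1) by ring,
    show μ + 2 + k + 1 = (μ + k + 2) + 1 by ring,
    show μ + (k + 1 : ℝ) + 1 = μ + k + 2 by ring, Gamma_add_one h]
  field_simp

lemma besselTerm_succ (hx : 0 < x) (h : μ + k + 1 ≠ 0) :
    besselTerm μ (k + 1) x = besselTerm μ k x * (x / 2) ^ 2 / ((k + 1) * (μ + k + 1)) := by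
  simp only [besselTerm, Nat.factorial_succ, Nat.cast_mul, Nat.cast_succ]
  rw [show μ + 2 * ((k : ℝ) + 1) = μ + 2 * k + 2 by ring, rpow_add (by positivity), rpow_two,
    show μ + (k + 1 : ℝ) + 1 = (μ + k + 1) + 1 by ring, Gamma_add_one h]
  field_simp

lemma summable_besselTerm (hμ : -1 < μ) (hx : 0 < x) : Summable (besselTerm μ · x) := by
  refine summable_of_ratio_test_tendsto_lt_one zero_lt_one
    (.of_forall fun k => (besselTerm_pos hμ hx k).ne') ?_
  have hratio : ∀ k : ℕ, ‖besselTerm μ (k + 1) x‖ / ‖besselTerm μ k x‖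
      = (x / 2) ^ 2 / ((k + 1) * (μ + k + 1)) := fun k => by
    have hk : 0 < μ + k + 1 := by linarith [k.cast_nonneg (α := ℝ)]
    rw [Real.norm_of_nonneg (besselTerm_pos hμ hx _).le,
      Real.norm_of_nonneg (besselTerm_pos hμ hx _).le, besselTerm_succ hx hk.ne',
      mul_div_assoc, mul_div_cancel_left₀ _ (besselTerm_pos hμ hx k).ne']
  simp only [hratio]
  refine tendsto_const_nhds.div_atTop (Filter.Tendsto.atTop_mul_atTop₀ ?_ ?_)
  · exact Filter.tendsto_atTop_add_const_right _ 1 tendsto_natCast_atTop_atTop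
  · exact Filter.tendsto_atTop_add_const_right _ 1
      (Filter.tendsto_atTop_add_const_left _ μ tendsto_natCast_atTop_atTop)

end besselTerm

section besselI

variable {μ x : ℝ}

lemma hasSum_besselI (hμ : -1 < μ) (hx : 0 < x) : HasSum (besselTerm μ · x) (besselI μ x) :=
  (summable_besselTerm hμ hx).hasSum

lemma hasSum_besselI_add_one (hμ : -1 < μ) (hx : 0 < x) :
    HasSum (fun k : ℕ => besselTerm μ k x * (x / 2) / (μ + k + 1)) (besselI (μ + 1) x) :=
  (hasSum_besselI (by linarith) hx).congr_fun fun k =>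
    (besselTerm_add_one hx (by linarith [k.cast_nonneg (α := ℝ)])).symm

lemma hasSum_besselI_add_three (hμ : -1 < μ) (hx : 0 < x) :
    HasSum (fun k : ℕ => besselTerm μ k x * (x / 2) * k / ((μ + k + 1) * (μ + k + 2)))
      (besselI (μ + 3) x) := by
  refine (hasSum_nat_add_iff' 1).mp ?_
  simp only [Finset.range_one, Finset.sum_singleton, CharP.cast_eq_zero, mul_zero, zero_div,
    sub_zero]
  refine (hasSum_besselI (μ := μ + 3) (by linarith) hx).congr_fun fun k => ?_
  have hk := k.cast_nonneg (α := ℝ)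
  rw [show μ + 3 = μ + 2 + 1 by ring, besselTerm_add_one hx (by linarith),
    besselTerm_add_two (by linarith)]
  push_cast
  rw [show μ + (k + 1 : ℝ) + 1 = μ + k + 2 by ring,
    show μ + (k + 1 : ℝ) + 2 = μ + 2 + k + 1 by ring, div_mul_eq_div_div]
  ring

end besselI

lemma hasSum_integral_besselI_div_rpow {ν n x : ℝ} (hμ : -1 < ν + n) (hn : -1 < n)
    (hx : 0 < x) :
    HasSum (fun k : ℕ => x * besselTerm (ν + n) k x / x ^ ν / (n + 2 * k + 1))
      (∫ t in (0 : ℝ)..x, besselI (ν + n) t / t ^ ν) := by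
  have hdiv {t : ℝ} (ht : 0 < t) (k : ℕ) :
      besselTerm (ν + n) k t / t ^ ν = besselTerm (ν + n) k 1 * t ^ (n + 2 * k) := by
    rw [besselTerm_div_rpow ν ht, add_sub_cancel_left]
  set F : ℕ → ℝ → ℝ := fun k t => besselTerm (ν + n) k 1 * t ^ (n + 2 * k)
  have hexp (k : ℕ) : -1 < n + 2 * k := by linarith [k.cast_nonneg (α := ℝ)]
  have hF_int (k : ℕ) : IntegrableOn (F k) (Ioc 0 x) :=
    ((intervalIntegral.intervalIntegrable_rpow' (hexp k)).const_mul _).1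
  have hF_nonneg (k : ℕ) : ∀ t ∈ Ioc 0 x, 0 ≤ F k t := fun t ht =>
    mul_nonneg (besselTerm_pos hμ one_pos k).le (rpow_nonneg ht.1.le _)
  have hF_integral (k : ℕ) :
      ∫ t in Ioc 0 x, F k t = x * besselTerm (ν + n) k x / x ^ ν / (n + 2 * k + 1) := by
    rw [← intervalIntegral.integral_of_le hx.le, intervalIntegral.integral_const_mul,
      integral_rpow (.inl (hexp k)), zero_rpow (by linarith [hexp k]), mul_div_assoc x,
      hdiv hx, rpow_add_one hx.ne']
    ring
  have hsum : Summable fun k : ℕ => x * besselTerm (ν + n) k x / x ^ ν / (n + 2 * k + 1) := by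
    refine .of_nonneg_of_le (fun k => ?_) (fun k => ?_)
      (((summable_besselTerm hμ hx).mul_left x).div_const (x ^ ν) |>.div_const (n + 1))
    · have := besselTerm_pos hμ hx k
      have : 0 < n + 2 * k + 1 := by linarith [hexp k]
      positivity
    · exact div_le_div_of_nonneg_left (by have := besselTerm_pos hμ hx k; positivity)
        (by linarith) (by linarith [k.cast_nonneg (α := ℝ)])
  have hseries : ∫ t in Ioc 0 x, besselI (ν + n) t / t ^ ν = ∫ t in Ioc 0 x, ∑' k, F k t :=
    setIntegral_congr_fun measurableSet_Ioc fun t ht => by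
      simp only [besselI, F, ← hdiv ht.1, ← tsum_div_const]
      rfl
  rw [intervalIntegral.integral_of_le hx.le, hseries]
  refine (hasSum_integral_of_summable_integral_norm hF_int (hsum.congr fun k => ?_)).congr_fun
    fun k => (hF_integral k).symm
  rw [← hF_integral k]
  exact setIntegral_congr_fun measurableSet_Ioc fun t ht =>
    (Real.norm_of_nonneg (hF_nonneg k t ht)).symm

section coefficients

variable {ν n k : ℝ}

/-- `B` and `y` play the roles of `a_k` and `x^ν`. -/
lemma besselI_coeff_identity (hn : n + 1 ≠ 0) (h₁ : ν + n + k + 1 ≠ 0)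
    (h₂ : ν + n + k + 2 ≠ 0) (h₃ : n + 2 * k + 1 ≠ 0) (B x y : ℝ) :
    2 * (ν + n + 1) / (n + 1) * (B * (x / 2) / (ν + n + k + 1) / y)
      - (2 * ν + n + 1) / (n + 1) * (B * (x / 2) * k / ((ν + n + k + 1) * (ν + n + k + 2)) / y)
    = x * B / y / (n + 2 * k + 1)
      + x * B / y * (k * ((2 * ν + n + 1) * (2 * ν + n + 3)
        / (2 * (n + 1) * (ν + n + k + 1) * (ν + n + k + 2) * (n + 2 * k + 1)))) := by
  field_simp
  ring

lemma besselI_coeff_gap_pos (hn : -1 < n) (hν : -(n + 1) / 2 < ν) (hk : 0 ≤ k) :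
    0 < (2 * ν + n + 1) * (2 * ν + n + 3)
      / (2 * (n + 1) * (ν + n + k + 1) * (ν + n + k + 2) * (n + 2 * k + 1)) := by
  have hb : 0 < 2 * ν + n + 1 := by linarith
  refine div_pos (mul_pos hb (by linarith)) ?_
  have h₁ : 0 < ν + n + k + 1 := by linarith
  exact mul_pos (mul_pos (mul_pos (mul_pos two_pos (by linarith)) h₁) (by linarith))
    (by linarith)

end coefficients

theorem stmt_11 (ν n : ℝ) (hn : n > -1) (hν : ν > -(n + 1) / 2) :
    ∀ x : ℝ, 0 < x →
      (∫ t in (0 : ℝ)..x, besselI (ν + n) t / t ^ ν) <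
        (2 * (ν + n + 1) / (n + 1)) * (besselI (ν + n + 1) x / x ^ ν)
          - ((2 * ν + n + 1) / (n + 1)) * (besselI (ν + n + 3) x / x ^ ν) := by
  intro x hx
  have hμ : -1 < ν + n := by linarith
  have hL := hasSum_integral_besselI_div_rpow hμ hn hx
  have hR := (((hasSum_besselI_add_one hμ hx).div_const (x ^ ν)).mul_left
    (2 * (ν + n + 1) / (n + 1))).sub
    (((hasSum_besselI_add_three hμ hx).div_const (x ^ ν)).mul_left ((2 * ν + n + 1) / (n + 1)))
  have hP (k : ℕ) : 0 < x * besselTerm (ν + n) k x / x ^ ν := by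
    have := besselTerm_pos hμ hx k
    positivity
  have hG (k : ℕ) := besselI_coeff_gap_pos hn hν k.cast_nonneg
  have hgap (k : ℕ) := besselI_coeff_identity (ν := ν) (n := n) (k := k) (by linarith)
    (by linarith [k.cast_nonneg (α := ℝ)]) (by linarith [k.cast_nonneg (α := ℝ)])
    (by linarith [k.cast_nonneg (α := ℝ)]) (besselTerm (ν + n) k x) x (x ^ ν)
  refine hasSum_lt (i := 1) (fun k => ?_) ?_ hL hR
  · rw [hgap k]
    exact le_add_of_nonneg_right (mul_nonneg (hP k).le (mul_nonneg k.cast_nonneg (hG k).le))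
  · rw [hgap 1]
    exact lt_add_of_pos_right _ (mul_pos (hP 1) (mul_pos (by norm_num) (hG 1)))
end

section
/- Let n > −1, ν > −(n+1)/2, and suppose C > 0 is a constant such that ∫_0^x I_{ν+n}(t)/t^ν dt ≤ C · I_{ν+n}(x)/x^ν for all x > 0. If 0 < γ < 1/C and γ < 1, then for all x > 0, ∫_0^x e^{−γt} I_{ν+n}(t)/t^ν dt < (e^{−γx}/(1 − Cγ)) · ∫_0^x I_{ν+n}(t)/t^ν dt. -/
/-! Write `f t = I_{ν+n}(t) / t^ν` and `F x = ∫₀ˣ f`. Integration by parts against `e^{-γt}`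
gives `∫₀ˣ e^{-γt} f = e^{-γx} F x + γ ∫₀ˣ e^{-γt} F`, and `F ≤ C f` bounds the last integral
by `C ∫₀ˣ e^{-γt} f`; solving for `∫₀ˣ e^{-γt} f` gives the claim with `≤`. It is strict
because `F < C f` near `0`: the series gives `f t = tⁿ h t` with `h = besselIRegular (ν + n)`
positive and increasing, so `F t ≤ t f t / (n + 1) < C f t` for `t < C (n + 1)`. -/

open MeasureTheory Set Real

open scoped Nat

noncomputable def besselCoeff (μ : ℝ) (k : ℕ) : ℝ := ((k ! : ℝ) * Gamma (μ + k + 1))⁻¹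

noncomputable def besselSeries (μ y : ℝ) : ℝ := ∑' k : ℕ, besselCoeff μ k * y ^ k

theorem besselI_eq_rpow_mul_besselSeries (μ : ℝ) {t : ℝ} (ht : 0 < t) :
    besselI μ t = (t / 2) ^ μ * besselSeries μ ((t / 2) ^ 2) := by
  rw [besselI, besselSeries, ← tsum_mul_left]
  refine tsum_congr fun k => ?_
  rw [rpow_add (by positivity), show 2 * (k : ℝ) = ((2 * k : ℕ) : ℝ) by push_cast; ring,
    rpow_natCast, pow_mul, besselCoeff, div_eq_mul_inv]
  ring

section besselSeries

variable {μ : ℝ}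

theorem besselCoeff_pos (hμ : -1 < μ) (k : ℕ) : 0 < besselCoeff μ k := by
  have := Gamma_pos_of_pos (by linarith [k.cast_nonneg (α := ℝ)] : 0 < μ + k + 1)
  unfold besselCoeff
  positivity

theorem besselCoeff_succ (hμ : -1 < μ) (k : ℕ) :
    besselCoeff μ (k + 1) = besselCoeff μ k / ((k + 1) * (μ + k + 1)) := by
  have hk : 0 < μ + k + 1 := by linarith [k.cast_nonneg (α := ℝ)]
  have hΓ := (Gamma_pos_of_pos hk).ne'
  rw [besselCoeff, besselCoeff, Nat.factorial_succ, Nat.cast_mul, Nat.cast_add_one,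
    show μ + (k + 1) + 1 = (μ + k + 1) + 1 by ring, Gamma_add_one hk.ne']
  field_simp

theorem summable_besselCoeff_mul_pow (hμ : -1 < μ) {y : ℝ} (hy : 0 ≤ y) :
    Summable fun k => besselCoeff μ k * y ^ k := by
  refine summable_of_ratio_norm_eventually_le (r := 1 / 2) (by norm_num) ?_
  filter_upwards [tendsto_natCast_atTop_atTop.eventually_ge_atTop (2 * y + |μ|)] with k hk
  have hc := besselCoeff_pos hμ k
  have h1 : 1 ≤ μ + k + 1 := by linarith [neg_abs_le μ]
  have h2 : 2 * y ≤ (k + 1) * (μ + k + 1) := by nlinarith [abs_nonneg μ]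
  rw [besselCoeff_succ hμ, norm_of_nonneg (by positivity), norm_of_nonneg (by positivity),
    pow_succ, div_mul_eq_mul_div, div_le_iff₀ (by positivity)]
  nlinarith [mul_nonneg hc.le (pow_nonneg hy k)]

theorem besselSeries_pos (hμ : -1 < μ) {y : ℝ} (hy : 0 ≤ y) : 0 < besselSeries μ y := by
  have h0 : 0 < besselCoeff μ 0 * y ^ 0 := by simpa using besselCoeff_pos hμ 0
  exact h0.trans_le <| (summable_besselCoeff_mul_pow hμ hy).le_tsum 0 fun k _ =>
    mul_nonneg (besselCoeff_pos hμ k).le (pow_nonneg hy k)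

theorem besselSeries_monotoneOn (hμ : -1 < μ) : MonotoneOn (besselSeries μ) (Ici 0) :=
  fun _ ha _ hb hab => (summable_besselCoeff_mul_pow hμ ha).tsum_le_tsum
    (fun k => mul_le_mul_of_nonneg_left (pow_le_pow_left₀ ha hab k) (besselCoeff_pos hμ k).le)
    (summable_besselCoeff_mul_pow hμ hb)

theorem continuous_besselSeries (hμ : -1 < μ) : Continuous (besselSeries μ) := by
  refine continuous_iff_continuousAt.2 fun y₀ => ?_
  set R := |y₀| + 1
  have hR : 0 ≤ R := by positivity
  have hcont : ContinuousOn (besselSeries μ) (Metric.ball 0 R) := by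
    refine continuousOn_tsum (fun k => (continuous_const.mul (continuous_pow k)).continuousOn)
      (summable_besselCoeff_mul_pow hμ hR) fun k y hy => ?_
    rw [mem_ball_zero_iff, norm_eq_abs] at hy
    rw [norm_mul, norm_pow, norm_of_nonneg (besselCoeff_pos hμ k).le, norm_eq_abs]
    exact mul_le_mul_of_nonneg_left (pow_le_pow_left₀ (abs_nonneg y) hy.le k)
      (besselCoeff_pos hμ k).le
  refine hcont.continuousAt (Metric.isOpen_ball.mem_nhds ?_)
  rw [mem_ball_zero_iff, norm_eq_abs]
  linarith

end besselSeries

theorem integral_rpow_mul_le {n t : ℝ} {h : ℝ → ℝ} (hn : -1 < n) (ht : 0 ≤ t)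
    (hh : ContinuousOn h (Icc 0 t)) (hle : ∀ s ∈ Icc 0 t, h s ≤ h t) :
    ∫ s in 0..t, s ^ n * h s ≤ t ^ (n + 1) / (n + 1) * h t := by
  have hpow : IntervalIntegrable (fun s : ℝ => s ^ n) volume 0 t :=
    intervalIntegral.intervalIntegrable_rpow' hn
  calc ∫ s in 0..t, s ^ n * h s ≤ ∫ s in 0..t, s ^ n * h t := by
        refine intervalIntegral.integral_mono_on ht
          (hpow.mul_continuousOn (by rwa [uIcc_of_le ht])) (hpow.mul_const _) fun s hs => ?_
        exact mul_le_mul_of_nonneg_left (hle s hs) (rpow_nonneg hs.1 n)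
    _ = t ^ (n + 1) / (n + 1) * h t := by
        rw [intervalIntegral.integral_mul_const, integral_rpow (Or.inl hn),
          zero_rpow (by linarith), sub_zero]

theorem intervalIntegral_lt_of_le_of_lt_near_left {f g : ℝ → ℝ} {a b ε : ℝ} (hab : a < b)
    (hε : a < ε) (hfi : IntervalIntegrable f volume a b) (hgi : IntervalIntegrable g volume a b)
    (hle : ∀ t ∈ Ioc a b, f t ≤ g t) (hlt : ∀ t ∈ Ioo a ε, f t < g t) :
    ∫ t in a..b, f t < ∫ t in a..b, g t := by
  refine intervalIntegral.integral_lt_integral_of_ae_le_of_measure_setOfPred_lt_ne_zero hab.le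
    hfi hgi ((ae_restrict_iff' measurableSet_Ioc).2 (ae_of_all _ hle)) ?_
  have hm : a < min ε b := lt_min hε hab
  refine (lt_of_lt_of_le ?_ (measure_mono (s := Ioo a (min ε b)) fun t ht =>
    hlt t ⟨ht.1, ht.2.trans_le (min_le_left _ _)⟩)).ne'
  rw [Measure.restrict_apply measurableSet_Ioo,
    inter_eq_left.2 (Ioo_subset_Ioc_self.trans (Ioc_subset_Ioc_right (min_le_right _ _))),
    Real.volume_Ioo]
  simpa using hm

section ExpWeight

variable {f : ℝ → ℝ} {x : ℝ}

theorem intervalIntegral_exp_mul_eq (γ : ℝ) (hx : 0 ≤ x) (hfc : ContinuousOn f (Ioi 0))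
    (hfi : IntervalIntegrable f volume 0 x) :
    ∫ t in 0..x, exp (-(γ * t)) * f t =
      exp (-(γ * x)) * (∫ t in 0..x, f t) +
        γ * ∫ t in 0..x, exp (-(γ * t)) * ∫ s in 0..t, f s := by
  have hE : ∀ t, HasDerivAt (fun t => exp (-(γ * t))) (-γ * exp (-(γ * t))) t := fun t => by
    simpa [mul_comm] using ((hasDerivAt_id t).const_mul γ).neg.exp
  have hF : ∀ t ∈ Ioo (min 0 x) (max 0 x), HasDerivAt (fun t => ∫ s in 0..t, f s) (f t) t := by
    rintro t ⟨ht₀, htx⟩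
    rw [min_eq_left hx] at ht₀
    rw [max_eq_right hx] at htx
    exact intervalIntegral.integral_hasDerivAt_right
      (hfi.mono_set (uIcc_subset_uIcc_left (by rw [uIcc_of_le hx]; exact ⟨ht₀.le, htx.le⟩)))
      (hfc.stronglyMeasurableAtFilter isOpen_Ioi t ht₀) (hfc.continuousAt (Ioi_mem_nhds ht₀))
  rw [intervalIntegral.integral_mul_deriv_eq_deriv_mul_of_hasDerivAt
    (fun t _ => (hE t).continuousAt.continuousWithinAt)
    (intervalIntegral.continuousOn_primitive_interval' hfi left_mem_uIcc)
    (fun t _ => hE t) hF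
    ((by fun_prop : Continuous fun t => -γ * exp (-(γ * t))).intervalIntegrable _ _) hfi]
  simp only [intervalIntegral.integral_same, mul_zero, sub_zero, neg_mul, mul_assoc,
    intervalIntegral.integral_neg, intervalIntegral.integral_const_mul, sub_neg_eq_add]

theorem intervalIntegral_exp_mul_lt {C γ ε : ℝ} (hx : 0 < x) (hγ : 0 < γ) (hCγ : C * γ < 1)
    (hfc : ContinuousOn f (Ioi 0)) (hfi : IntervalIntegrable f volume 0 x)
    (hle : ∀ t ∈ Ioc 0 x, ∫ s in 0..t, f s ≤ C * f t) (hε : 0 < ε)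
    (hlt : ∀ t ∈ Ioo 0 ε, ∫ s in 0..t, f s < C * f t) :
    ∫ t in 0..x, exp (-(γ * t)) * f t < exp (-(γ * x)) / (1 - C * γ) * ∫ t in 0..x, f t := by
  have hEf : IntervalIntegrable (fun t => exp (-(γ * t)) * f t) volume 0 x :=
    hfi.continuousOn_mul (by fun_prop)
  have hEF : IntervalIntegrable (fun t => exp (-(γ * t)) * ∫ s in 0..t, f s) volume 0 x :=
    ((by fun_prop : Continuous fun t => exp (-(γ * t))).continuousOn.mul
      (intervalIntegral.continuousOn_primitive_interval' hfi left_mem_uIcc)).intervalIntegrable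
  have hcomp : ∫ t in 0..x, exp (-(γ * t)) * (∫ s in 0..t, f s) <
      C * ∫ t in 0..x, exp (-(γ * t)) * f t := by
    rw [← intervalIntegral.integral_const_mul]
    refine intervalIntegral_lt_of_le_of_lt_near_left hx hε hEF (hEf.const_mul C)
      (fun t ht => ?_) (fun t ht => ?_) <;> rw [mul_left_comm]
    · exact mul_le_mul_of_nonneg_left (hle t ht) (exp_pos _).le
    · exact mul_lt_mul_of_pos_left (hlt t ht) (exp_pos _)
  have hparts := intervalIntegral_exp_mul_eq γ hx.le hfc hfi
  rw [div_mul_eq_mul_div, lt_div_iff₀ (by linarith)]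
  linarith [mul_lt_mul_of_pos_left hcomp hγ]

end ExpWeight

noncomputable def besselIRegular (μ t : ℝ) : ℝ := besselSeries μ ((t / 2) ^ 2) / 2 ^ μ

section besselIRegular

variable {μ : ℝ}

theorem besselI_eq_rpow_mul_besselIRegular (μ : ℝ) {t : ℝ} (ht : 0 < t) :
    besselI μ t = t ^ μ * besselIRegular μ t := by
  rw [besselI_eq_rpow_mul_besselSeries μ ht, besselIRegular, div_rpow ht.le zero_le_two]
  ring

theorem continuous_besselIRegular (hμ : -1 < μ) : Continuous (besselIRegular μ) :=
  ((continuous_besselSeries hμ).comp (by fun_prop)).div_const _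

theorem besselIRegular_pos (hμ : -1 < μ) (t : ℝ) : 0 < besselIRegular μ t :=
  div_pos (besselSeries_pos hμ (sq_nonneg _)) (by positivity)

theorem besselIRegular_monotoneOn (hμ : -1 < μ) : MonotoneOn (besselIRegular μ) (Ici 0) :=
  fun s hs t _ hst => div_le_div_of_nonneg_right (besselSeries_monotoneOn hμ
    (mem_Ici.2 (sq_nonneg _)) (mem_Ici.2 (sq_nonneg _))
    (pow_le_pow_left₀ (by linarith [mem_Ici.1 hs]) (by linarith) 2)) (by positivity)

end besselIRegular

theorem besselI_div_rpow_eq (ν n : ℝ) {t : ℝ} (ht : 0 < t) :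
    besselI (ν + n) t / t ^ ν = t ^ n * besselIRegular (ν + n) t := by
  have htν := (rpow_pos_of_pos ht ν).ne'
  rw [besselI_eq_rpow_mul_besselIRegular _ ht, rpow_add ht]
  field_simp

section besselIDivRpow

variable {ν n : ℝ}

theorem continuousOn_besselI_div_rpow (hμ : -1 < ν + n) :
    ContinuousOn (fun t => besselI (ν + n) t / t ^ ν) (Ioi 0) :=
  ((continuousOn_id.rpow_const fun _ ht => Or.inl (ne_of_gt ht)).mul
    (continuous_besselIRegular hμ).continuousOn).congr fun _ ht => besselI_div_rpow_eq ν n ht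

theorem besselI_div_rpow_pos (hμ : -1 < ν + n) {t : ℝ} (ht : 0 < t) :
    0 < besselI (ν + n) t / t ^ ν := by
  rw [besselI_div_rpow_eq ν n ht]
  exact mul_pos (rpow_pos_of_pos ht n) (besselIRegular_pos hμ t)

theorem intervalIntegrable_besselI_div_rpow (hn : -1 < n) (hμ : -1 < ν + n) {x : ℝ}
    (hx : 0 ≤ x) : IntervalIntegrable (fun t => besselI (ν + n) t / t ^ ν) volume 0 x := by
  refine ((intervalIntegral.intervalIntegrable_rpow' hn).mul_continuousOn
    (continuous_besselIRegular hμ).continuousOn).congr_uIoo fun t ht =>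
      (besselI_div_rpow_eq ν n ?_).symm
  rw [uIoo_of_le hx] at ht
  exact ht.1

theorem integral_besselI_div_rpow_le (hn : -1 < n) (hμ : -1 < ν + n) {t : ℝ} (ht : 0 < t) :
    ∫ s in 0..t, besselI (ν + n) s / s ^ ν ≤ t / (n + 1) * (besselI (ν + n) t / t ^ ν) := by
  calc ∫ s in 0..t, besselI (ν + n) s / s ^ ν
        = ∫ s in 0..t, s ^ n * besselIRegular (ν + n) s := by
        refine intervalIntegral.integral_congr_uIoo fun s hs => besselI_div_rpow_eq ν n ?_
        rw [uIoo_of_le ht.le] at hs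
        exact hs.1
    _ ≤ t ^ (n + 1) / (n + 1) * besselIRegular (ν + n) t :=
        integral_rpow_mul_le hn ht.le (continuous_besselIRegular hμ).continuousOn fun s hs =>
          besselIRegular_monotoneOn hμ hs.1 ht.le hs.2
    _ = t / (n + 1) * (besselI (ν + n) t / t ^ ν) := by
        rw [besselI_div_rpow_eq ν n ht, rpow_add_one ht.ne']
        ring

end besselIDivRpow

theorem stmt_15_general (ν n C γ : ℝ) (hn : n > -1) (hν : ν > -(n + 1) / 2) (hC : 0 < C)
    (hCbound : ∀ x : ℝ, 0 < x →
      (∫ t in (0 : ℝ)..x, besselI (ν + n) t / t ^ ν) ≤ C * (besselI (ν + n) x / x ^ ν))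
    (hγ0 : 0 < γ) (hγC : γ < 1 / C) :
    ∀ x : ℝ, 0 < x →
      (∫ t in (0 : ℝ)..x, Real.exp (-(γ * t)) * besselI (ν + n) t / t ^ ν) <
        (Real.exp (-(γ * x)) / (1 - C * γ)) * ∫ t in (0 : ℝ)..x, besselI (ν + n) t / t ^ ν := by
  intro x hx
  have hμ : -1 < ν + n := by linarith
  have hCγ : C * γ < 1 := by rwa [lt_div_iff₀ hC, mul_comm] at hγC
  simp_rw [mul_div_assoc]
  refine intervalIntegral_exp_mul_lt hx hγ0 hCγ (continuousOn_besselI_div_rpow hμ)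
    (intervalIntegrable_besselI_div_rpow hn hμ hx.le) (fun t ht => hCbound t ht.1)
    (mul_pos hC (by linarith : 0 < n + 1)) fun t ht => ?_
  calc ∫ s in 0..t, besselI (ν + n) s / s ^ ν
      ≤ t / (n + 1) * (besselI (ν + n) t / t ^ ν) := integral_besselI_div_rpow_le hn hμ ht.1
    _ < C * (besselI (ν + n) t / t ^ ν) :=
        mul_lt_mul_of_pos_right ((div_lt_iff₀ (by linarith)).2 ht.2)
          (besselI_div_rpow_pos hμ ht.1)

theorem stmt_15 (ν n C γ : ℝ) (hn : n > -1) (hν : ν > -(n + 1) / 2) (hC : 0 < C)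
    (hCbound : ∀ x : ℝ, 0 < x →
      (∫ t in (0 : ℝ)..x, besselI (ν + n) t / t ^ ν) ≤ C * (besselI (ν + n) x / x ^ ν))
    (hγ0 : 0 < γ) (hγC : γ < 1 / C) (hγ1 : γ < 1) :
    ∀ x : ℝ, 0 < x →
      (∫ t in (0 : ℝ)..x, Real.exp (-(γ * t)) * besselI (ν + n) t / t ^ ν) <
        (Real.exp (-(γ * x)) / (1 - C * γ)) * ∫ t in (0 : ℝ)..x, besselI (ν + n) t / t ^ ν :=
  stmt_15_general ν n C γ hn hν hC hCbound hγ0 hγC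
end

section
/- Let ν > 1/2. Then for all x > 0, I_ν(x) < (x^ν/(2^{ν−1} Γ(ν))) · ₁F₂(1/2; 3/2, ν; x²/4) < 2ν I_ν(x) − (2ν−1) I_{ν+2}(x). -/
open MeasureTheory Set Real

/-- Pochhammer symbol `(a)_k = a (a+1) ⋯ (a+k−1)`. -/
noncomputable def poch (a : ℝ) (k : ℕ) : ℝ := ∏ i ∈ Finset.range k, (a + (i : ℝ))

/-- Generalized hypergeometric function `₁F₂(a; b, c; z)`. -/
noncomputable def hyp1F2 (a b c z : ℝ) : ℝ :=
  ∑' k : ℕ, poch a k / (poch b k * poch c k) * z ^ k / (Nat.factorial k : ℝ)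

noncomputable def termA (ν u : ℝ) (k : ℕ) : ℝ :=
  u ^ k / ((Nat.factorial k : ℝ) * Real.Gamma (ν + (k : ℝ) + 1))

noncomputable def termB (ν u : ℝ) (k : ℕ) : ℝ :=
  2 * u ^ k / ((2 * (k : ℝ) + 1) * (Nat.factorial k : ℝ) * Real.Gamma (ν + (k : ℝ)))

noncomputable def termC (ν u : ℝ) (k : ℕ) : ℝ :=
  u ^ (k + 1) / ((Nat.factorial k : ℝ) * Real.Gamma (ν + (k : ℝ) + 3))

noncomputable def termD (ν u : ℝ) : ℕ → ℝ
  | 0 => 0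
  | (k + 1) => termC ν u k

lemma poch_succ (a : ℝ) (k : ℕ) : poch a (k + 1) = poch a k * (a + k) :=
  Finset.prod_range_succ _ _

lemma poch_pos {a : ℝ} (ha : 0 < a) (k : ℕ) : 0 < poch a k :=
  Finset.prod_pos fun i _ => by positivity

lemma one_le_poch {a : ℝ} (ha : 1 ≤ a) (k : ℕ) : 1 ≤ poch a k := by
  induction k with
  | zero => simp [poch]
  | succ n ih =>
    rw [poch_succ]
    have hn : (0:ℝ) ≤ (n : ℝ) := Nat.cast_nonneg n
    nlinarith

lemma gamma_mul_poch {a : ℝ} (ha : 0 < a) (k : ℕ) :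
    Real.Gamma a * poch a k = Real.Gamma (a + k) := by
  induction k with
  | zero => simp [poch]
  | succ n ih =>
    have hn : (0:ℝ) ≤ n := Nat.cast_nonneg n
    have h1 : a + (n:ℝ) ≠ 0 := by linarith
    rw [poch_succ, ← mul_assoc, ih,
      show a + ((n+1 : ℕ) : ℝ) = (a + n) + 1 by push_cast; ring,
      Real.Gamma_add_one h1]
    ring

lemma poch_three_half (k : ℕ) : poch (3/2) k = (2 * k + 1) * poch (1/2) k := by
  induction k with
  | zero => simp [poch]
  | succ n ih =>
    rw [poch_succ, poch_succ, ih]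
    push_cast
    ring

lemma summable_term {μ u : ℝ} (hμ : 0 < μ) (hu : 0 ≤ u) :
    Summable fun k : ℕ => u ^ k / ((Nat.factorial k : ℝ) * Real.Gamma (μ + (k : ℝ) + 1)) := by
  have hΓ : 0 < Real.Gamma (μ + 1) := Real.Gamma_pos_of_pos (by linarith)
  have hg : Summable (fun k : ℕ => u ^ k / ((Nat.factorial k : ℝ) * Real.Gamma (μ + 1))) := by
    have h0 : Summable (fun k : ℕ => (1 / Real.Gamma (μ + 1)) * (u ^ k / (Nat.factorial k : ℝ))) :=
      (Real.summable_pow_div_factorial u).mul_left _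
    refine h0.congr fun k => ?_
    rw [div_mul_div_comm, one_mul, mul_comm]
  refine Summable.of_nonneg_of_le (fun k => ?_) (fun k => ?_) hg
  · have hk : (0:ℝ) ≤ k := Nat.cast_nonneg k
    have : 0 < Real.Gamma (μ + (k : ℝ) + 1) := Real.Gamma_pos_of_pos (by linarith)
    positivity
  · have hk : (0:ℝ) ≤ k := Nat.cast_nonneg k
    have hΓk : Real.Gamma (μ + 1) ≤ Real.Gamma (μ + (k : ℝ) + 1) := by
      have h1 := gamma_mul_poch (a := μ + 1) (by linarith) k
      have h2 := one_le_poch (a := μ + 1) (by linarith) k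
      have h3 : μ + 1 + (k:ℝ) = μ + (k:ℝ) + 1 := by ring
      rw [h3] at h1
      nlinarith
    have hfk : (0:ℝ) < (Nat.factorial k : ℝ) := by positivity
    exact div_le_div_of_nonneg_left (by positivity) (by positivity)
      (mul_le_mul_of_nonneg_left hΓk hfk.le)

lemma termA_lt_termB {ν u : ℝ} (hν : ν > 1/2) (hu : 0 < u) (k : ℕ) :
    termA ν u k < termB ν u k := by
  have hk : (0:ℝ) ≤ k := Nat.cast_nonneg k
  have hνk : (0:ℝ) < ν + k := by linarith
  have hΓ : 0 < Real.Gamma (ν + k) := Real.Gamma_pos_of_pos hνk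
  have hf : (0:ℝ) < Nat.factorial k := by positivity
  unfold termA termB
  rw [Real.Gamma_add_one hνk.ne', div_lt_div_iff₀ (by positivity) (by positivity)]
  nlinarith [mul_pos (mul_pos (pow_pos hu k) hf) hΓ]

lemma termB_le {ν u : ℝ} (hν : ν > 1/2) (hu : 0 ≤ u) (k : ℕ) :
    termB ν u k ≤ 2 * ν * termA ν u k := by
  have hk : (0:ℝ) ≤ k := Nat.cast_nonneg k
  have hνk : (0:ℝ) < ν + k := by linarith
  have hΓ : 0 < Real.Gamma (ν + k) := Real.Gamma_pos_of_pos hνk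
  have hf : (0:ℝ) < Nat.factorial k := by positivity
  unfold termA termB
  rw [Real.Gamma_add_one hνk.ne', ← mul_div_assoc, div_le_div_iff₀ (by positivity) (by positivity)]
  nlinarith [mul_nonneg (mul_nonneg (mul_nonneg (pow_nonneg hu k) hf.le) hΓ.le)
    (mul_nonneg hk (by linarith : (0:ℝ) ≤ 2 * ν - 1))]

lemma termB_zero {ν u : ℝ} (hν : ν > 1/2) :
    termB ν u 0 = 2 * ν * termA ν u 0 := by
  have hν0 : ν ≠ 0 := by intro h; rw [h] at hν; norm_num at hν
  have hΓ : Real.Gamma ν ≠ 0 := (Real.Gamma_pos_of_pos (by linarith)).ne'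
  unfold termA termB
  simp only [Nat.cast_zero, pow_zero, Nat.factorial_zero, Nat.cast_one, add_zero]
  rw [Real.Gamma_add_one hν0]
  field_simp
  ring

lemma termB_lt {ν u : ℝ} (hν : ν > 1/2) (hu : 0 < u) (m : ℕ) :
    termB ν u (m + 1) < 2 * ν * termA ν u (m + 1) - (2 * ν - 1) * termC ν u m := by
  have hm : (0:ℝ) ≤ m := Nat.cast_nonneg m
  have hνm : (0:ℝ) < ν + m := by linarith
  have hg0 : 0 < Real.Gamma (ν + m) := Real.Gamma_pos_of_pos hνm
  have hf : (0:ℝ) < Nat.factorial m := by positivity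
  have hΓ1 : Real.Gamma (ν + ((m + 1 : ℕ) : ℝ)) = (ν + m) * Real.Gamma (ν + m) := by
    rw [show ν + ((m + 1 : ℕ) : ℝ) = (ν + m) + 1 by push_cast; ring,
      Real.Gamma_add_one hνm.ne']
  have hΓ2 : Real.Gamma (ν + ((m + 1 : ℕ) : ℝ) + 1)
      = (ν + m + 1) * ((ν + m) * Real.Gamma (ν + m)) := by
    rw [show ν + ((m + 1 : ℕ) : ℝ) + 1 = ((ν + m) + 1) + 1 by push_cast; ring,
      Real.Gamma_add_one (by linarith), Real.Gamma_add_one hνm.ne']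
  have hΓ3 : Real.Gamma (ν + (m : ℝ) + 3)
      = (ν + m + 2) * ((ν + m + 1) * ((ν + m) * Real.Gamma (ν + m))) := by
    rw [show ν + (m : ℝ) + 3 = (((ν + m) + 1) + 1) + 1 by ring,
      Real.Gamma_add_one (by linarith), Real.Gamma_add_one (by linarith),
      Real.Gamma_add_one hνm.ne']
    ring
  have hfs : ((Nat.factorial (m + 1) : ℝ)) = ((m : ℝ) + 1) * (Nat.factorial m : ℝ) := by
    rw [Nat.factorial_succ]; push_cast; ring
  set P : ℝ := u ^ (m + 1) / ((Nat.factorial m : ℝ) * ((ν + m + 2) * ((ν + m + 1) * ((ν + m) * Real.Gamma (ν + m))))) with hP_def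
  have hP : 0 < P := by
    apply div_pos (pow_pos hu _)
    positivity
  have eB : termB ν u (m + 1) =
      (2 * (ν + m + 1) * (ν + m + 2) / ((2 * ((m : ℝ) + 1) + 1) * ((m : ℝ) + 1))) * P := by
    unfold termB
    rw [hΓ1, hfs, hP_def]
    push_cast
    field_simp
  have eA : 2 * ν * termA ν u (m + 1) =
      (2 * ν * (ν + m + 2) / ((m : ℝ) + 1)) * P := by
    unfold termA
    rw [hΓ2, hfs, hP_def]
    push_cast
    field_simp
  have eC : (2 * ν - 1) * termC ν u m = (2 * ν - 1) * P := by
    unfold termC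
    rw [hΓ3, hP_def]
  rw [eB, eA, eC, ← sub_mul]
  apply mul_lt_mul_of_pos_right _ hP
  have hk1 : (0:ℝ) < (m : ℝ) + 1 := by linarith
  have h2k1 : (0:ℝ) < 2 * ((m : ℝ) + 1) + 1 := by linarith
  have key : 2 * ν * (ν + m + 2) / ((m : ℝ) + 1) - (2 * ν - 1)
      - 2 * (ν + m + 1) * (ν + m + 2) / ((2 * ((m : ℝ) + 1) + 1) * ((m : ℝ) + 1))
      = (((m : ℝ) + 1) * (4 * ν ^ 2 - 1)) / ((2 * ((m : ℝ) + 1) + 1) * ((m : ℝ) + 1)) := by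
    field_simp
    ring
  have h4 : (0:ℝ) < 4 * ν ^ 2 - 1 := by nlinarith
  have hpos : (0:ℝ) < (((m : ℝ) + 1) * (4 * ν ^ 2 - 1)) / ((2 * ((m : ℝ) + 1) + 1) * ((m : ℝ) + 1)) := by
    apply div_pos (mul_pos hk1 h4) (by positivity)
  linarith

lemma besselI_eq {ν x : ℝ} (hx : 0 < x) :
    besselI ν x = (x / 2) ^ ν * ∑' k : ℕ, termA ν ((x / 2) ^ 2) k := by
  have ht : 0 < x / 2 := by linarith
  rw [besselI, ← tsum_mul_left]
  refine tsum_congr fun k => ?_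
  unfold termA
  rw [Real.rpow_add ht, show (2:ℝ) * (k : ℝ) = ((2 * k : ℕ) : ℝ) by push_cast; ring,
    Real.rpow_natCast, pow_mul, mul_div_assoc]

lemma besselI2_eq {ν x : ℝ} (hx : 0 < x) :
    besselI (ν + 2) x = (x / 2) ^ ν * ∑' k : ℕ, termC ν ((x / 2) ^ 2) k := by
  have ht : 0 < x / 2 := by linarith
  rw [besselI, ← tsum_mul_left]
  refine tsum_congr fun k => ?_
  unfold termC
  rw [show ν + 2 + 2 * (k : ℝ) = ν + ((2 * (k + 1) : ℕ) : ℝ) by push_cast; ring,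
    Real.rpow_add ht, Real.rpow_natCast, pow_mul,
    show ν + 2 + (k : ℝ) + 1 = ν + (k : ℝ) + 3 by ring, mul_div_assoc]

lemma middle_eq {ν x : ℝ} (hν : ν > 1/2) (hx : 0 < x) :
    (x ^ ν / ((2 : ℝ) ^ (ν - 1) * Real.Gamma ν)) * hyp1F2 (1/2) (3/2) ν (x ^ 2 / 4)
      = (x / 2) ^ ν * ∑' k : ℕ, termB ν ((x / 2) ^ 2) k := by
  have ht : 0 < x / 2 := by linarith
  have hν0 : (0:ℝ) < ν := by linarith
  have hΓν : 0 < Real.Gamma ν := Real.Gamma_pos_of_pos hν0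
  rw [hyp1F2, ← tsum_mul_left, ← tsum_mul_left]
  refine tsum_congr fun k => ?_
  unfold termB
  have hk : (0:ℝ) ≤ k := Nat.cast_nonneg k
  have hνk : (0:ℝ) < ν + k := by linarith
  have hΓνk : 0 < Real.Gamma (ν + k) := Real.Gamma_pos_of_pos hνk
  have hpoch12 : 0 < poch (1/2) k := poch_pos (by norm_num) k
  have hpochν : 0 < poch ν k := poch_pos hν0 k
  have hf : (0:ℝ) < Nat.factorial k := by positivity
  have hPν : Real.Gamma ν * poch ν k = Real.Gamma (ν + k) := gamma_mul_poch hν0 k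
  rw [poch_three_half]
  have hx2 : x ^ 2 / 4 = (x / 2) ^ 2 := by ring
  rw [hx2]
  have h2ν : ((2:ℝ)) ^ (ν - 1) = (2:ℝ) ^ ν / 2 := by
    rw [Real.rpow_sub (by norm_num), Real.rpow_one]
  have hxν : x ^ ν = (x / 2) ^ ν * (2:ℝ) ^ ν := by
    rw [← Real.mul_rpow (by linarith) (by norm_num)]
    norm_num
  rw [h2ν, hxν, ← hPν]
  have h2νpos : (0:ℝ) < (2:ℝ) ^ (ν : ℝ) := Real.rpow_pos_of_pos (by norm_num) ν
  have h2k1 : (0:ℝ) < 2 * (k:ℝ) + 1 := by linarith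
  have htν : (0:ℝ) < (x / 2) ^ (ν : ℝ) := Real.rpow_pos_of_pos ht ν
  field_simp

theorem stmt_18 (ν : ℝ) (hν : ν > 1 / 2) :
    ∀ x : ℝ, 0 < x →
      besselI ν x <
        (x ^ ν / ((2 : ℝ) ^ (ν - 1) * Real.Gamma ν)) *
          hyp1F2 (1 / 2) (3 / 2) ν (x ^ 2 / 4) ∧
      (x ^ ν / ((2 : ℝ) ^ (ν - 1) * Real.Gamma ν)) *
          hyp1F2 (1 / 2) (3 / 2) ν (x ^ 2 / 4) <
        2 * ν * besselI ν x - (2 * ν - 1) * besselI (ν + 2) x := by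
  intro x hx
  have ht : 0 < x / 2 := by linarith
  set u : ℝ := (x / 2) ^ 2 with hu_def
  have hu : 0 < u := by positivity
  have hT : 0 < (x / 2) ^ (ν : ℝ) := Real.rpow_pos_of_pos ht ν
  have hA : Summable (termA ν u) := by
    have := summable_term (μ := ν) (u := u) (by linarith) hu.le
    exact this
  have hC : Summable (termC ν u) := by
    have h1 : Summable (fun k : ℕ => u * (u ^ k / ((Nat.factorial k : ℝ) * Real.Gamma ((ν + 2) + (k : ℝ) + 1)))) :=
      (summable_term (μ := ν + 2) (u := u) (by linarith) hu.le).mul_left u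
    refine h1.congr fun k => ?_
    unfold termC
    rw [show (ν + 2) + (k : ℝ) + 1 = ν + (k : ℝ) + 3 by ring, pow_succ]
    ring
  have hB : Summable (termB ν u) := by
    refine Summable.of_nonneg_of_le (fun k => ?_) (fun k => termB_le hν hu.le k)
      (hA.mul_left (2 * ν))
    have hk : (0:ℝ) ≤ k := Nat.cast_nonneg k
    have hΓ : 0 < Real.Gamma (ν + k) := Real.Gamma_pos_of_pos (by linarith)
    unfold termB
    positivity
  have hD : Summable (termD ν u) := by
    have : Summable (fun n : ℕ => termD ν u (n + 1)) := hC
    exact (summable_nat_add_iff 1).mp this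
  have hDsum : ∑' k, termD ν u k = ∑' k, termC ν u k := by
    rw [Summable.tsum_eq_zero_add hD]
    simp [termD]
  have e1 := besselI_eq (ν := ν) hx
  have e2 := besselI2_eq (ν := ν) hx
  have e3 := middle_eq hν hx
  rw [← hu_def] at e1 e2 e3
  constructor
  · rw [e1, e3]
    exact mul_lt_mul_of_pos_left
      (Summable.tsum_lt_tsum (i := 0) (fun k => (termA_lt_termB hν hu k).le)
        (termA_lt_termB hν hu 0) hA hB) hT
  · rw [e3, e1, e2]
    have hG : Summable (fun k : ℕ => 2 * ν * termA ν u k - (2 * ν - 1) * termD ν u k) :=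
      (hA.mul_left (2 * ν)).sub (hD.mul_left (2 * ν - 1))
    have hrhs : 2 * ν * ((x / 2) ^ ν * ∑' k, termA ν u k)
        - (2 * ν - 1) * ((x / 2) ^ ν * ∑' k, termC ν u k)
        = (x / 2) ^ ν * ∑' k : ℕ, (2 * ν * termA ν u k - (2 * ν - 1) * termD ν u k) := by
      rw [Summable.tsum_sub (hA.mul_left (2 * ν)) (hD.mul_left (2 * ν - 1)),
        tsum_mul_left, tsum_mul_left, hDsum]
      ring
    rw [hrhs]
    refine mul_lt_mul_of_pos_left (Summable.tsum_lt_tsum (i := 1) (fun k => ?_) ?_ hB hG) hT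
    · cases k with
      | zero =>
        rw [termB_zero (u := u) hν]
        simp [termD]
      | succ m =>
        exact (termB_lt hν hu m).le
    · exact termB_lt hν hu 0
end
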